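/- In the k-state game, the profile in which both players play the uniform distribution over the two pure strategies (0,1,1,…,1) and (1,1,1,…,1) is a Nash equilibrium, with expected payoff 1 − 1/k to player 1. In particular, the game has a Nash equilibrium in which each player's strategy has support of size 2. -/
import Mathlib


open Finset
open scoped Classical

namespace KState

/-- Matching pennies payoff: `1` if `a = b`, `-1` otherwise. -/
noncomputable def m (a b : Fin 2) : ℝ := if a = b then 1 else -1

/-- Payoff at a non-matching-pennies state: `-1` if `(a, b) = (0, 1)`, `1` otherwise. -/
noncomputable def w (a b : Fin 2) : ℝ := if a = 0 ∧ b = 1 then -1 else 1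

/-- Player 1's payoff in the `k`-state game:
`V x y = (1/k) (m x₁ y₁ + ∑_{j=2}^k w x_j y_j)`, where coordinate `1` corresponds to the
index `j = 0` of `Fin k`. Player 2's payoff is `-V x y`. -/
noncomputable def V (k : ℕ) (x y : Fin k → Fin 2) : ℝ :=
  (1 / (k : ℝ)) * ∑ j : Fin k, (if j.val = 0 then m (x j) (y j) else w (x j) (y j))

/-- A mixed strategy: a probability distribution on the pure strategies `{0,1}^k`. -/
def IsMixed {k : ℕ} (μ : (Fin k → Fin 2) → ℝ) : Prop :=
  (∀ x, 0 ≤ μ x) ∧ ∑ x, μ x = 1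

/-- Expected payoff to player 1, extending `V` bilinearly. -/
noncomputable def EV (k : ℕ) (μ1 μ2 : (Fin k → Fin 2) → ℝ) : ℝ :=
  ∑ x, ∑ y, μ1 x * μ2 y * V k x y

/-- The all-ones pure strategy `(1, 1, …, 1)`. -/
def ones (k : ℕ) : Fin k → Fin 2 := fun _ => 1

/-- The pure strategy `(0, 1, 1, …, 1)`. -/
def zeroOnes (k : ℕ) : Fin k → Fin 2 := fun j => if j.val = 0 then 0 else 1

/-- The uniform mixture of `(0, 1, …, 1)` and `(1, 1, …, 1)`. -/
noncomputable def μstar (k : ℕ) : (Fin k → Fin 2) → ℝ :=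
  fun x => if x = zeroOnes k ∨ x = ones k then (1 / 2 : ℝ) else 0


lemma zeroOnes_ne_ones (k : ℕ) (hk : 0 < k) : zeroOnes k ≠ ones k := by
  intro h
  have := congrFun h ⟨0, hk⟩
  simp [zeroOnes, ones] at this

lemma sum_mustar_mul (k : ℕ) (hk : 0 < k) (f : (Fin k → Fin 2) → ℝ) :
    ∑ x, μstar k x * f x = (f (zeroOnes k) + f (ones k)) / 2 := by
  have hne := zeroOnes_ne_ones k hk
  have : ∀ x : Fin k → Fin 2, μstar k x * f x =
      (if x = zeroOnes k then (1:ℝ)/2 * f x else 0) +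
      (if x = ones k then (1:ℝ)/2 * f x else 0) := by
    intro x
    by_cases h1 : x = zeroOnes k <;> by_cases h2 : x = ones k <;>
      simp_all [μstar]
  simp_rw [this]
  rw [Finset.sum_add_distrib, Finset.sum_ite_eq' Finset.univ,
    Finset.sum_ite_eq' Finset.univ]
  simp; ring

lemma sum_ite_zero (k : ℕ) (hk : 0 < k) (c d : ℝ) :
    ∑ j : Fin k, (if (j : ℕ) = 0 then c else d) = c + (k - 1 : ℝ) * d := by
  have : ∀ j : Fin k, (if (j : ℕ) = 0 then c else d)
      = d + (if j = ⟨0, hk⟩ then c - d else 0) := by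
    intro j
    by_cases h : (j : ℕ) = 0
    · simp [h, Fin.ext_iff]
    · simp [h, Fin.ext_iff]
  simp_rw [this]
  rw [Finset.sum_add_distrib, Finset.sum_const, Finset.sum_ite_eq' Finset.univ]
  simp
  ring


lemma m_add (a : Fin 2) : m 0 a + m 1 a = 0 := by
  fin_cases a <;> norm_num [m]

lemma m_add' (a : Fin 2) : m a 0 + m a 1 = 0 := by
  fin_cases a <;> norm_num [m]

lemma w_one (a : Fin 2) : w 1 a = 1 := by
  fin_cases a <;> norm_num [w]

lemma w_le_one (a b : Fin 2) : w a b ≤ 1 := by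
  unfold w; split <;> norm_num

lemma V_sum_right (k : ℕ) (hk : 0 < k) (y : Fin k → Fin 2) :
    V k (zeroOnes k) y + V k (ones k) y = 2 * (1 - 1 / k) := by
  have hk0 : (k : ℝ) ≠ 0 := Nat.cast_ne_zero.mpr hk.ne'
  unfold V
  rw [← mul_add, ← Finset.sum_add_distrib]
  have : ∀ j : Fin k,
      ((if (j:ℕ) = 0 then m (zeroOnes k j) (y j) else w (zeroOnes k j) (y j)) +
       (if (j:ℕ) = 0 then m (ones k j) (y j) else w (ones k j) (y j)))
      = (if (j:ℕ) = 0 then (0:ℝ) else 2) := by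
    intro j
    by_cases h : (j:ℕ) = 0
    · simp [h, zeroOnes, ones, m_add]
    · simp [h, zeroOnes, ones, w_one]; norm_num
  rw [Finset.sum_congr rfl fun j _ => this j, sum_ite_zero k hk]
  field_simp
  ring

lemma V_sum_left_le (k : ℕ) (hk : 0 < k) (x : Fin k → Fin 2) :
    V k x (zeroOnes k) + V k x (ones k) ≤ 2 * (1 - 1 / k) := by
  have hk0 : (k : ℝ) ≠ 0 := Nat.cast_ne_zero.mpr hk.ne'
  have hkpos : (0:ℝ) < (k:ℝ) := by exact_mod_cast hk
  unfold V
  rw [← mul_add, ← Finset.sum_add_distrib]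
  have hle : ∑ j : Fin k,
      ((if (j:ℕ) = 0 then m (x j) (zeroOnes k j) else w (x j) (zeroOnes k j)) +
       (if (j:ℕ) = 0 then m (x j) (ones k j) else w (x j) (ones k j)))
      ≤ ∑ j : Fin k, (if (j:ℕ) = 0 then (0:ℝ) else 2) := by
    apply Finset.sum_le_sum
    intro j _
    by_cases h : (j:ℕ) = 0
    · simp [h, zeroOnes, ones, m_add']
    · simp only [h, if_false, zeroOnes, ones]
      have h1 := w_le_one (x j) (if (j:ℕ) = 0 then 0 else 1)
      have h2 := w_le_one (x j) 1
      simp [h] at h1 ⊢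
      linarith
  calc (1/(k:ℝ)) * ∑ j : Fin k,
      ((if (j:ℕ) = 0 then m (x j) (zeroOnes k j) else w (x j) (zeroOnes k j)) +
       (if (j:ℕ) = 0 then m (x j) (ones k j) else w (x j) (ones k j)))
      ≤ (1/(k:ℝ)) * ∑ j : Fin k, (if (j:ℕ) = 0 then (0:ℝ) else 2) := by
        apply mul_le_mul_of_nonneg_left hle (by positivity)
    _ = 2 * (1 - 1 / k) := by
        rw [sum_ite_zero k hk]; field_simp; ring

lemma EV_left (k : ℕ) (hk : 0 < k) (μ2 : (Fin k → Fin 2) → ℝ)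
    (hμ2 : IsMixed μ2) : EV k (μstar k) μ2 = 1 - 1 / k := by
  unfold EV
  have : ∀ x, ∑ y, μstar k x * μ2 y * V k x y
      = μstar k x * ∑ y, μ2 y * V k x y := by
    intro x
    rw [Finset.mul_sum]
    exact Finset.sum_congr rfl fun y _ => by ring
  simp_rw [this]
  rw [sum_mustar_mul k hk]
  rw [← Finset.sum_add_distrib]
  have : ∀ y, μ2 y * V k (zeroOnes k) y + μ2 y * V k (ones k) y
      = μ2 y * (2 * (1 - 1/k)) := by
    intro y
    rw [← mul_add, V_sum_right k hk]
  simp_rw [this]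
  rw [← Finset.sum_mul, hμ2.2]
  ring

lemma EV_right_le (k : ℕ) (hk : 0 < k) (μ1 : (Fin k → Fin 2) → ℝ)
    (hμ1 : IsMixed μ1) : EV k μ1 (μstar k) ≤ 1 - 1 / k := by
  unfold EV
  have hswap : ∀ x, ∑ y, μ1 x * μstar k y * V k x y
      = μ1 x * ((V k x (zeroOnes k) + V k x (ones k)) / 2) := by
    intro x
    have : ∑ y, μ1 x * μstar k y * V k x y = μ1 x * ∑ y, μstar k y * V k x y := by
      rw [Finset.mul_sum]
      exact Finset.sum_congr rfl fun y _ => by ring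
    rw [this, sum_mustar_mul k hk]
  simp_rw [hswap]
  calc ∑ x, μ1 x * ((V k x (zeroOnes k) + V k x (ones k)) / 2)
      ≤ ∑ x, μ1 x * (1 - 1/k) := by
        apply Finset.sum_le_sum
        intro x _
        apply mul_le_mul_of_nonneg_left _ (hμ1.1 x)
        have := V_sum_left_le k hk x
        linarith
    _ = 1 - 1/k := by rw [← Finset.sum_mul, hμ1.2, one_mul]

lemma mustar_mixed (k : ℕ) (hk : 0 < k) : IsMixed (μstar k) := by
  constructor
  · intro x; unfold μstar; split <;> norm_num
  · have := sum_mustar_mul k hk (fun _ => 1)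
    simpa using this


/-- In the `k`-state game, the profile in which both players play the uniform
distribution over `(0, 1, …, 1)` and `(1, 1, …, 1)` is a Nash equilibrium with
expected payoff `1 - 1/k` to player 1; in particular each player's equilibrium
strategy has support of size `2`. -/
theorem kstate_support_two_nash (k : ℕ) (hk : 2 ≤ k) :
    IsMixed (μstar k) ∧
    (∀ μ1', IsMixed μ1' → EV k μ1' (μstar k) ≤ EV k (μstar k) (μstar k)) ∧
    (∀ μ2', IsMixed μ2' → EV k (μstar k) (μstar k) ≤ EV k (μstar k) μ2') ∧
    EV k (μstar k) (μstar k) = 1 - 1 / k ∧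
    (univ.filter fun x => μstar k x ≠ 0).card = 2 := by
  have hk0 : 0 < k := by omega
  have hmix := mustar_mixed k hk0
  have hEV : EV k (μstar k) (μstar k) = 1 - 1/k := EV_left k hk0 _ hmix
  refine ⟨hmix, ?_, ?_, hEV, ?_⟩
  · intro μ1' h; rw [hEV]; exact EV_right_le k hk0 μ1' h
  · intro μ2' h; rw [hEV, EV_left k hk0 μ2' h]
  · have hset : (univ.filter fun x => μstar k x ≠ 0) = {zeroOnes k, ones k} := by
      ext x
      by_cases h : x = zeroOnes k ∨ x = ones k <;>
        simp [μstar, h] <;> tauto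
    rw [hset, Finset.card_insert_of_notMem (by simp [zeroOnes_ne_ones k hk0]),
      Finset.card_singleton]

end KState
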